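/- arXiv:math/0004094 — 2 statements merged into one kernel-verified Lean document; each statement's English description precedes it below -/
import Mathlib

section
/- With D(2;2k+1) = (2!·3!···(2k)!)·((2k)!/(2k-3)!)·(6k-1)!·2^{4k-1} and D(k) = (2!·3!···(2k-4)!)·(2k-4)!·3²·(6k-1)!·2^{4k+3} for k ≥ 4 (and D(k) = (6k-1)!·2^{6k-1} for 1 ≤ k ≤ 3): for all integers k₁ ≥ 2 and k ≥ 4, D(2;2k₁+1)·D(k) divides D(k+k₁). -/
/-! Match the factors of `D(2;2k₁+1)·D(k)` with those of `D(k+k₁)` one by one.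
The products `2!···m!` and `2!···n!` multiply to a divisor of `2!···(m+n)!`, since the factor
`j!` of the second divides the factor `(m+j)!` of the third. Since `m!·n! ∣ (m+n)!` and
`(2k₁)(2k₁-1)(2k₁-2) ∣ (2k₁)!`, both `(6k₁-1)!·(6k-1)!` and `(2k₁)(2k₁-1)(2k₁-2)·(2k-4)!`
divide the corresponding factorial of `D(k+k₁)`. The powers of `2` multiply to
`2^{4(k+k₁)+2}`. -/

/-- The product of factorials `2!·3!···m!` (equal to `1` for `m < 2`). -/
def facProd (m : ℕ) : ℕ := ∏ i ∈ Finset.Icc 2 m, Nat.factorial i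

/-- `D(k)`: `(6k-1)!·2^{6k-1}` for `k ≤ 3`, and
`(2!·3!···(2k-4)!)·(2k-4)!·3²·(6k-1)!·2^{4k+3}` for `k ≥ 4`. -/
def D (k : ℕ) : ℕ :=
  if k ≤ 3 then Nat.factorial (6 * k - 1) * 2 ^ (6 * k - 1)
  else facProd (2 * k - 4) * Nat.factorial (2 * k - 4) * 3 ^ 2 *
    Nat.factorial (6 * k - 1) * 2 ^ (4 * k + 3)

/-- The two-leg denominator bound `D(2;2k+1) = (2!···(2k)!)·((2k)(2k-1)(2k-2))·(6k-1)!·2^{4k-1}`. -/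
def D2 (k : ℕ) : ℕ :=
  facProd (2 * k) * Nat.descFactorial (2 * k) 3 * Nat.factorial (6 * k - 1) * 2 ^ (4 * k - 1)

open Nat

theorem facProd_succ (n : ℕ) : facProd (n + 1) = facProd n * (n + 1)! := by
  rcases n with _ | n
  · rfl
  · exact Finset.prod_Icc_succ_top (by omega) _

theorem facProd_mul_facProd_dvd (m n : ℕ) : facProd m * facProd n ∣ facProd (m + n) := by
  induction n with
  | zero => simp [facProd]
  | succ n ih =>
    rw [facProd_succ, ← add_assoc, facProd_succ, ← mul_assoc]
    exact mul_dvd_mul ih (factorial_dvd_factorial (by omega))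

theorem descFactorial_mul_factorial_dvd_factorial_add {n k : ℕ} (h : k ≤ n) (m : ℕ) :
    n.descFactorial k * m ! ∣ (n + m)! :=
  (mul_dvd_mul_right (Dvd.intro_left _ (factorial_mul_descFactorial h)) _).trans
    (factorial_mul_factorial_dvd_factorial_add n m)

theorem factorial_mul_factorial_dvd_factorial_of_add_le {a b c : ℕ} (h : a + b ≤ c) :
    a ! * b ! ∣ c ! :=
  (factorial_mul_factorial_dvd_factorial_add a b).trans (factorial_dvd_factorial h)

theorem D_of_four_le {k : ℕ} (hk : 4 ≤ k) :
    D k = facProd (2 * k - 4) * (2 * k - 4)! * 3 ^ 2 * (6 * k - 1)! * 2 ^ (4 * k + 3) :=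
  if_neg (by omega)

/-- For `k₁ ≥ 2` and `k ≥ 4`, `D(2;2k₁+1)·D(k)` divides `D(k+k₁)`. -/
theorem D2_mul_D_dvd (k₁ k : ℕ) (h₁ : 2 ≤ k₁) (hk : 4 ≤ k) :
    D2 k₁ * D k ∣ D (k + k₁) := by
  have hsum : 2 * (k + k₁) - 4 = 2 * k₁ + (2 * k - 4) := by omega
  rw [D2, D_of_four_le hk, D_of_four_le (by omega), hsum]
  have hfacProd := facProd_mul_facProd_dvd (2 * k₁) (2 * k - 4)
  have hdesc :=
    descFactorial_mul_factorial_dvd_factorial_add (show 3 ≤ 2 * k₁ by omega) (2 * k - 4)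
  have hodd := factorial_mul_factorial_dvd_factorial_of_add_le
    (show (6 * k₁ - 1) + (6 * k - 1) ≤ 6 * (k + k₁) - 1 by omega)
  have hpow : 2 ^ (4 * k₁ - 1) * 2 ^ (4 * k + 3) ∣ 2 ^ (4 * (k + k₁) + 3) := by
    rw [← pow_add]
    exact Nat.pow_dvd_pow 2 (by omega)
  calc _ = facProd (2 * k₁) * facProd (2 * k - 4) * ((2 * k₁).descFactorial 3 * (2 * k - 4)!) *
        3 ^ 2 * ((6 * k₁ - 1)! * (6 * k - 1)!) * (2 ^ (4 * k₁ - 1) * 2 ^ (4 * k + 3)) := by ring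
    _ ∣ _ :=
      mul_dvd_mul (mul_dvd_mul (mul_dvd_mul (mul_dvd_mul hfacProd hdesc) dvd_rfl) hodd) hpow
end

section
/- Let n ≥ 5 and define D(2;n) = (2!·3!···(n-1)!)·((n-1)!/(n-4)!)·(3n-4)!·2^{2n-3}. For every integer u with 4 ≤ u ≤ n+1, the integer d_u = 2!·3!···(u-1)!·(3n-u)!·2^{3n-u} divides 2·D(2;n). -/
private lemma facProd_split (a b : ℕ) (h1 : 1 ≤ a) (h : a ≤ b) :
    facProd a * ∏ i ∈ Finset.Ioc a b, Nat.factorial i = facProd b := by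
  unfold facProd
  rw [show (2:ℕ) = 1+1 from rfl, Finset.Icc_add_one_left_eq_Ioc, Finset.Icc_add_one_left_eq_Ioc]
  exact Finset.prod_Ioc_consecutive _ h1 h

private lemma factorial_split (a b : ℕ) (h : a ≤ b) :
    Nat.factorial a * ∏ i ∈ Finset.Ioc a b, i = Nat.factorial b := by
  rw [← Finset.prod_Ico_id_eq_factorial, ← Finset.prod_Ico_id_eq_factorial,
    Finset.Ico_add_one_right_eq_Icc, Finset.Ico_add_one_right_eq_Icc, show (1:ℕ) = 0+1 from rfl,
    Finset.Icc_add_one_left_eq_Ioc, Finset.Icc_add_one_left_eq_Ioc]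
  exact Finset.prod_Ioc_consecutive _ (Nat.zero_le a) h

private lemma key_two_pow (n k : ℕ) (hn : 5 ≤ n) (hk1 : 1 ≤ k) (hk : k ≤ n - 3) :
    2 ^ (k + 1) ∣ (∏ i ∈ Finset.Ioc (n - k) (n - 1), Nat.factorial i) *
      ((n - 1) * (n - 2) * (n - 3)) * (∏ j ∈ Finset.Ioc (2 * n - 1 + k) (3 * n - 4), j) := by
  match k with
  | 0 => omega
  | 1 =>
    -- need 4 ∣ desc * Q
    rcases Nat.even_or_odd n with ⟨m, hm⟩ | ⟨m, hm⟩
    · -- n even : 2 ∣ (n-2), 2 ∣ Q via factor 2n+2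
      have h1 : (2:ℕ) ∣ (n - 1) * (n - 2) * (n - 3) :=
        Dvd.dvd.mul_right (Dvd.dvd.mul_left ⟨m - 1, by omega⟩ _) _
      have hmem : 2 * n + 2 ∈ Finset.Ioc (2 * n - 1 + 1) (3 * n - 4) := by
        simp only [Finset.mem_Ioc]; omega
      have h2 : (2:ℕ) ∣ ∏ j ∈ Finset.Ioc (2 * n - 1 + 1) (3 * n - 4), j :=
        dvd_trans ⟨n + 1, by ring⟩ (Finset.dvd_prod_of_mem (fun j => j) hmem)
      rw [mul_assoc, show (2:ℕ)^(1+1) = 2 * 2 by norm_num]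
      exact ((mul_dvd_mul h1 h2).mul_left _)
    · -- n odd : 4 ∣ (n-1)*(n-3)
      have h1 : (2:ℕ)^(1+1) ∣ (n - 1) * (n - 2) * (n - 3) := by
        refine ⟨m * (n - 2) * (m - 1), ?_⟩
        rw [show n - 1 = 2 * m by omega, show n - 3 = 2 * (m - 1) by omega,
          show (2:ℕ)^(1+1) = 4 by norm_num]
        ring
      exact (h1.mul_left _).mul_right _
  | 2 =>
    -- P = (n-1)! and 8 ∣ (n-1)!
    apply Dvd.dvd.mul_right; apply Dvd.dvd.mul_right
    have h : Finset.Ioc (n - 2) (n - 1) = {n - 1} := by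
      apply Finset.ext; intro x; simp only [Finset.mem_Ioc, Finset.mem_singleton]; omega
    rw [h, Finset.prod_singleton]
    calc (2:ℕ)^(2+1) = 8 := by norm_num
      _ ∣ Nat.factorial 4 := by decide
      _ ∣ _ := Nat.factorial_dvd_factorial (by omega)
  | (k + 3) =>
    -- each factor of P is divisible by 4, and P has k+2 factors
    apply Dvd.dvd.mul_right; apply Dvd.dvd.mul_right
    have h4 : ∀ i ∈ Finset.Ioc (n - (k + 3)) (n - 1), (4:ℕ) ∣ Nat.factorial i := by
      intro i hi
      simp only [Finset.mem_Ioc] at hi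
      calc (4:ℕ) ∣ Nat.factorial 4 := by decide
        _ ∣ _ := Nat.factorial_dvd_factorial (by omega)
    have hP : (4:ℕ) ^ (Finset.Ioc (n - (k + 3)) (n - 1)).card ∣
        ∏ i ∈ Finset.Ioc (n - (k + 3)) (n - 1), Nat.factorial i := by
      rw [← Finset.prod_const]
      exact Finset.prod_dvd_prod_of_dvd _ _ h4
    have hcard : (Finset.Ioc (n - (k + 3)) (n - 1)).card = k + 2 := by
      rw [Nat.card_Ioc]; omega
    rw [hcard] at hP
    refine dvd_trans ?_ hP
    calc (2:ℕ)^(k+3+1) ∣ 2^(2*(k+2)) := pow_dvd_pow 2 (by omega)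
      _ = 4^(k+2) := by rw [pow_mul]; norm_num

/-- For `n ≥ 5`, with `D(2;n) = (2!···(n-1)!)·((n-1)(n-2)(n-3))·(3n-4)!·2^{2n-3}`,
every `d_u = 2!·3!···(u-1)!·(3n-u)!·2^{3n-u}` with `4 ≤ u ≤ n+1` divides `2·D(2;n)`. -/
theorem du_dvd_two_leg_denominator (n : ℕ) (hn : 5 ≤ n) (u : ℕ) (hu : 4 ≤ u)
    (hun : u ≤ n + 1) :
    facProd (u - 1) * Nat.factorial (3 * n - u) * 2 ^ (3 * n - u) ∣
      2 * (facProd (n - 1) * Nat.descFactorial (n - 1) 3 *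
        Nat.factorial (3 * n - 4) * 2 ^ (2 * n - 3)) := by
  rcases eq_or_lt_of_le hun with hun' | hun'
  · -- Case u = n + 1 : exact identity via a binomial coefficient
    obtain ⟨m, rfl⟩ : ∃ m, n = m + 5 := ⟨n - 5, by omega⟩
    have hu' : u = m + 6 := by omega
    subst hu'
    rw [show m + 6 - 1 = m + 5 by omega, show 3 * (m + 5) - (m + 6) = 2 * m + 9 by omega,
      show 3 * (m + 5) - 4 = 3 * m + 11 by omega, show 2 * (m + 5) - 3 = 2 * m + 7 by omega,
      show m + 5 - 1 = m + 4 by omega]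
    have hdesc : Nat.descFactorial (m + 4) 3 = (m + 4) * (m + 3) * (m + 2) := by
      simp only [Nat.descFactorial_succ, Nat.descFactorial_zero, mul_one, Nat.sub_zero]
      rw [show m + 4 - 1 = m + 3 by omega, show m + 4 - 2 = m + 2 by omega]
      ring
    have hfp : facProd (m + 5) = facProd (m + 4) * Nat.factorial (m + 5) := by
      rw [← facProd_split (m + 4) (m + 5) (by omega) (by omega), Nat.Ioc_succ_singleton,
        Finset.prod_singleton]
    have hch := Nat.choose_mul_factorial_mul_factorial (show m + 1 ≤ 3 * m + 11 by omega)
    rw [show 3 * m + 11 - (m + 1) = 2 * m + 10 by omega] at hch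
    refine ⟨Nat.choose (3 * m + 11) (m + 1), ?_⟩
    rw [hdesc, hfp, ← hch]
    rw [show (2 * m + 10) = (2 * m + 9) + 1 from rfl, Nat.factorial_succ (2*m+9),
      show Nat.factorial (m + 5) = (m+5)*(m+4)*(m+3)*(m+2)*Nat.factorial (m+1) by
        simp [Nat.factorial_succ]; ring,
      show 2 * m + 9 = (2 * m + 7) + 2 by omega, pow_add]
    ring
  · -- Case u ≤ n
    obtain ⟨k, hk⟩ : ∃ k, u + k = n + 1 := ⟨n + 1 - u, by omega⟩
    have hk1 : 1 ≤ k := by omega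
    have hk3 : k ≤ n - 3 := by omega
    rw [show u - 1 = n - k by omega, show 3 * n - u = 2 * n - 1 + k by omega]
    have hdesc : Nat.descFactorial (n - 1) 3 = (n - 1) * (n - 2) * (n - 3) := by
      simp only [Nat.descFactorial_succ, Nat.descFactorial_zero, mul_one, Nat.sub_zero]
      rw [show n - 1 - 1 = n - 2 by omega, show n - 1 - 2 = n - 3 by omega]
      ring
    rw [hdesc]
    set P := ∏ i ∈ Finset.Ioc (n - k) (n - 1), Nat.factorial i with hPdef
    set Q := ∏ j ∈ Finset.Ioc (2 * n - 1 + k) (3 * n - 4), j with hQdef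
    have hP : facProd (n - k) * P = facProd (n - 1) := facProd_split _ _ (by omega) (by omega)
    have hQ : Nat.factorial (2 * n - 1 + k) * Q = Nat.factorial (3 * n - 4) :=
      factorial_split _ _ (by omega)
    obtain ⟨c, hc⟩ := key_two_pow n k hn hk1 hk3
    refine ⟨c, ?_⟩
    rw [← hP, ← hQ]
    calc 2 * (facProd (n - k) * P * ((n - 1) * (n - 2) * (n - 3)) *
          (Nat.factorial (2 * n - 1 + k) * Q) * 2 ^ (2 * n - 3))
        = (facProd (n - k) * Nat.factorial (2 * n - 1 + k) * (2 * 2 ^ (2 * n - 3))) *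
          (P * ((n - 1) * (n - 2) * (n - 3)) * Q) := by ring
      _ = (facProd (n - k) * Nat.factorial (2 * n - 1 + k) * 2 ^ (2 * n - 2)) *
          (2 ^ (k + 1) * c) := by
          rw [← hc, ← pow_succ', show 2 * n - 3 + 1 = 2 * n - 2 by omega]
      _ = facProd (n - k) * Nat.factorial (2 * n - 1 + k) *
          (2 ^ (2 * n - 2) * 2 ^ (k + 1)) * c := by ring
      _ = facProd (n - k) * Nat.factorial (2 * n - 1 + k) * 2 ^ (2 * n - 1 + k) * c := by
          rw [← pow_add, show 2 * n - 2 + (k + 1) = 2 * n - 1 + k by omega]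
end
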